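/- arXiv:1409.8565 — 2 statements merged into one kernel-verified Lean document; each statement's English description precedes it below -/
import Mathlib

section
/- Let F ∈ ℝ^{p×r} and G ∈ ℝ^{m×r} be matrices with orthonormal columns, K ∈ ℝ^{r×r}, and D = diag(d_1,…,d_r) with d_1 ≥ … ≥ d_r > 0. If E ∈ ℝ^{p×m} satisfies ‖E‖_op ≤ 1 and ‖E‖_* ≤ r (nuclear norm), then ⟨F K G', F G' − E⟩ ≥ (d_r/2)·‖F G' − E‖_F² − ‖K − D‖_F·‖F G' − E‖_F, where ⟨A,B⟩ = Tr(A'B). -/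
open Matrix Real

/-- Vector of singular values of a real matrix (square roots of eigenvalues of `Aᴴ * A`). -/
noncomputable def singVals {p m : ℕ} (A : Matrix (Fin p) (Fin m) ℝ) : Fin m → ℝ :=
  fun i => Real.sqrt ((show (Aᵀ * A).IsHermitian by
    simpa [Matrix.conjTranspose_eq_transpose_of_trivial] using
      Matrix.isHermitian_conjTranspose_mul_self A).eigenvalues i)

/-- Operator (spectral) norm: largest singular value. -/
noncomputable def opNorm {p m : ℕ} (A : Matrix (Fin p) (Fin m) ℝ) : ℝ :=
  ⨆ i, singVals A i

/-- Nuclear norm: sum of singular values. -/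
noncomputable def nucNorm {p m : ℕ} (A : Matrix (Fin p) (Fin m) ℝ) : ℝ :=
  ∑ i, singVals A i

/-- Frobenius norm. -/
noncomputable def frob {p m : ℕ} (A : Matrix (Fin p) (Fin m) ℝ) : ℝ :=
  Real.sqrt (∑ i, ∑ j, (A i j) ^ 2)

/-!
Put `Δ = F Gᵀ - E` and `e = Fᵀ E G`. Orthonormality of the columns turns `⟨F N Gᵀ, Δ⟩` into
`⟨N, 1 - e⟩` for every `N`. Since `‖E‖_op ≤ 1`, every diagonal entry of `e` is at most `1`, so the
diagonal part `D` of `K` contributes `∑ dᵢ (1 - eᵢᵢ) ≥ d_r · tr (1 - e)`, while `K - D` contributes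
at least `-‖K - D‖_F ‖Δ‖_F` by Cauchy–Schwarz. Finally
`‖Δ‖_F² = r - 2 tr e + ‖E‖_F² ≤ 2 tr (1 - e)`, because `‖E‖_F² = ∑ σᵢ² ≤ ∑ σᵢ = ‖E‖_* ≤ r`.
-/

open MatrixOrder

section Frobenius

variable {p m : ℕ}

lemma trace_transpose_mul_eq_sum (A B : Matrix (Fin p) (Fin m) ℝ) :
    trace (Aᵀ * B) = ∑ i, ∑ j, A i j * B i j := by
  simp only [trace, diag, mul_apply, transpose_apply]
  exact Finset.sum_comm

lemma frob_sq (A : Matrix (Fin p) (Fin m) ℝ) : frob A ^ 2 = ∑ i, ∑ j, A i j ^ 2 :=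
  Real.sq_sqrt (by positivity)

lemma frob_sq_eq_trace (A : Matrix (Fin p) (Fin m) ℝ) : frob A ^ 2 = trace (Aᵀ * A) := by
  rw [frob_sq, trace_transpose_mul_eq_sum]
  simp only [sq]

lemma frob_eq_sqrt_trace (A : Matrix (Fin p) (Fin m) ℝ) : frob A = √(trace (Aᵀ * A)) := by
  rw [← frob_sq_eq_trace]
  exact (Real.sqrt_sq (Real.sqrt_nonneg _)).symm

lemma frob_sub_sq (A B : Matrix (Fin p) (Fin m) ℝ) :
    frob (A - B) ^ 2 = frob A ^ 2 - 2 * trace (Aᵀ * B) + frob B ^ 2 := by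
  have hBA : trace (Bᵀ * A) = trace (Aᵀ * B) := by
    rw [← trace_transpose, transpose_mul, transpose_transpose]
  simp only [frob_sq_eq_trace, transpose_sub, Matrix.sub_mul, Matrix.mul_sub, trace_sub, hBA]
  ring

lemma neg_frob_mul_frob_le_trace (A B : Matrix (Fin p) (Fin m) ℝ) :
    -(frob A * frob B) ≤ trace (Aᵀ * B) := by
  have h := Real.sum_mul_le_sqrt_mul_sqrt Finset.univ
    (fun q : Fin p × Fin m => -A q.1 q.2) (fun q => B q.1 q.2)
  simp only [Fintype.sum_prod_type, neg_sq, neg_mul, Finset.sum_neg_distrib] at h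
  rw [trace_transpose_mul_eq_sum]
  unfold frob
  linarith

end Frobenius

lemma trace_transpose_mul_mul_transpose_mul {ι κ μ ν R : Type*} [Fintype ι] [Fintype κ]
    [Fintype μ] [Fintype ν] [CommRing R] (F : Matrix ι κ R) (N : Matrix κ μ R)
    (G : Matrix ν μ R) (B : Matrix ι ν R) :
    trace ((F * N * Gᵀ)ᵀ * B) = trace (Nᵀ * (Fᵀ * B * G)) := by
  simp only [transpose_mul, transpose_transpose, Matrix.mul_assoc]
  rw [trace_mul_comm]
  simp only [Matrix.mul_assoc]

section Orthonormal

variable {p m r : ℕ} {F : Matrix (Fin p) (Fin r) ℝ} {G : Matrix (Fin m) (Fin r) ℝ}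

lemma transpose_mul_mul_transpose_mul (hF : Fᵀ * F = 1) (hG : Gᵀ * G = 1)
    (M : Matrix (Fin r) (Fin r) ℝ) : Fᵀ * (F * M * Gᵀ) * G = M := by
  simp only [← Matrix.mul_assoc, hF, Matrix.one_mul]
  rw [Matrix.mul_assoc, hG, Matrix.mul_one]

lemma frob_mul_mul_transpose (hF : Fᵀ * F = 1) (hG : Gᵀ * G = 1)
    (M : Matrix (Fin r) (Fin r) ℝ) : frob (F * M * Gᵀ) = frob M := by
  rw [frob_eq_sqrt_trace, frob_eq_sqrt_trace, trace_transpose_mul_mul_transpose_mul,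
    transpose_mul_mul_transpose_mul hF hG]

end Orthonormal

section SingularValues

variable {p m : ℕ}

lemma isHermitian_transpose_mul_self (A : Matrix (Fin p) (Fin m) ℝ) : (Aᵀ * A).IsHermitian := by
  simpa [conjTranspose_eq_transpose_of_trivial] using isHermitian_conjTranspose_mul_self A

lemma singVals_sq (A : Matrix (Fin p) (Fin m) ℝ) (i : Fin m) :
    singVals A i ^ 2 = (isHermitian_transpose_mul_self A).eigenvalues i := by
  refine Real.sq_sqrt ?_
  have hA : (Aᵀ * A).PosSemidef := by
    simpa [conjTranspose_eq_transpose_of_trivial] using posSemidef_conjTranspose_mul_self A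
  exact hA.eigenvalues_nonneg i

lemma frob_sq_eq_sum_singVals_sq (A : Matrix (Fin p) (Fin m) ℝ) :
    frob A ^ 2 = ∑ i, singVals A i ^ 2 := by
  simp only [frob_sq_eq_trace, (isHermitian_transpose_mul_self A).trace_eq_sum_eigenvalues,
    singVals_sq, RCLike.ofReal_real_eq_id, id]

variable {E : Matrix (Fin p) (Fin m) ℝ}

lemma singVals_le_one (hE : opNorm E ≤ 1) (i : Fin m) : singVals E i ≤ 1 :=
  (le_ciSup (Set.finite_range _).bddAbove i).trans hE

lemma frob_sq_le_nucNorm (hE : opNorm E ≤ 1) : frob E ^ 2 ≤ nucNorm E := by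
  rw [frob_sq_eq_sum_singVals_sq, nucNorm]
  gcongr with i
  exact pow_le_of_le_one (Real.sqrt_nonneg _) (singVals_le_one hE i) two_ne_zero

lemma transpose_mul_self_le_one (hE : opNorm E ≤ 1) : Eᵀ * E ≤ 1 := by
  have hEE := isHermitian_transpose_mul_self E
  refine (le_algebraMap_of_spectrum_le (r := (1 : ℝ)) ?_ hEE).trans_eq (map_one _)
  rw [hEE.spectrum_real_eq_range_eigenvalues]
  rintro _ ⟨i, rfl⟩
  rw [← singVals_sq]
  exact pow_le_one₀ (Real.sqrt_nonneg _) (singVals_le_one hE i)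

lemma mulVec_dotProduct_mulVec_le (hE : opNorm E ≤ 1) (y : Fin m → ℝ) :
    E *ᵥ y ⬝ᵥ E *ᵥ y ≤ y ⬝ᵥ y := by
  have h := (le_iff.mp (transpose_mul_self_le_one hE)).dotProduct_mulVec_nonneg y
  rwa [star_trivial, Matrix.sub_mulVec, one_mulVec, dotProduct_sub, sub_nonneg,
    ← mulVec_mulVec, dotProduct_mulVec, vecMul_transpose] at h

end SingularValues

lemma mul_trace_le_trace_diagonal_mul {n : Type*} [Fintype n] [DecidableEq n] {c : ℝ}
    {d : n → ℝ} {A : Matrix n n ℝ} (hc : ∀ i, c ≤ d i) (hA : ∀ i, 0 ≤ A i i) :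
    c * trace A ≤ trace (diagonal d * A) := by
  simp only [trace, diag, diagonal_mul, Finset.mul_sum]
  gcongr with i
  exacts [hA i, hc i]

section Compression

variable {p m r : ℕ} {F : Matrix (Fin p) (Fin r) ℝ} {G : Matrix (Fin m) (Fin r) ℝ}
  {E : Matrix (Fin p) (Fin m) ℝ}

lemma dotProduct_mulVec_le_one (hE : opNorm E ≤ 1) {x : Fin p → ℝ} {y : Fin m → ℝ}
    (hx : x ⬝ᵥ x = 1) (hy : y ⬝ᵥ y = 1) : x ⬝ᵥ E *ᵥ y ≤ 1 := by
  -- `0 ≤ ‖x - E y‖² ≤ 2 - 2 x ⬝ᵥ E y`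
  have hsq := dotProduct_self_star_nonneg (x - E *ᵥ y)
  have := mulVec_dotProduct_mulVec_le hE y
  simp only [star_trivial, sub_dotProduct, dotProduct_sub, dotProduct_comm (E *ᵥ y) x] at hsq
  linarith

lemma diag_transpose_mul_mul_le_one (hF : Fᵀ * F = 1) (hG : Gᵀ * G = 1) (hE : opNorm E ≤ 1)
    (i : Fin r) : (Fᵀ * E * G) i i ≤ 1 := by
  have hcol {n : ℕ} {U : Matrix (Fin n) (Fin r) ℝ} (hU : Uᵀ * U = 1) : Uᵀ i ⬝ᵥ Uᵀ i = 1 :=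
    (congrFun (congrFun hU i) i).trans (one_apply_eq i)
  have : (Fᵀ * E * G) i i = Fᵀ i ⬝ᵥ E *ᵥ Gᵀ i := by
    rw [dotProduct_mulVec]; rfl
  exact this ▸ dotProduct_mulVec_le_one hE (hcol hF) (hcol hG)

lemma frob_sub_sq_le_two_mul_trace (hF : Fᵀ * F = 1) (hG : Gᵀ * G = 1) (hE : opNorm E ≤ 1)
    (hEnuc : nucNorm E ≤ r) : frob (F * Gᵀ - E) ^ 2 ≤ 2 * trace (1 - Fᵀ * E * G) := by
  have hFG : F * Gᵀ = F * (1 : Matrix (Fin r) (Fin r) ℝ) * Gᵀ := by rw [Matrix.mul_one]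
  have hnorm : frob (F * Gᵀ) ^ 2 = r := by
    rw [hFG, frob_mul_mul_transpose hF hG, frob_sq_eq_trace]
    simp
  have hinner : trace ((F * Gᵀ)ᵀ * E) = trace (Fᵀ * E * G) := by
    rw [hFG, trace_transpose_mul_mul_transpose_mul, transpose_one, Matrix.one_mul]
  rw [frob_sub_sq, hnorm, hinner, trace_sub, trace_one, Fintype.card_fin]
  linarith [frob_sq_le_nucNorm hE]

end Compression

/-- Curvature lemma: for `F ∈ O(p,r)`, `G ∈ O(m,r)`, `K ∈ ℝ^{r×r}`,
`D = diag(d)` with `d₁ ≥ … ≥ d_r > 0`, and `E` with operator norm at most 1 and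
nuclear norm at most `r`,
`⟨F K G', F G' − E⟩ ≥ (d_r/2)‖F G' − E‖_F² − ‖K − D‖_F ‖F G' − E‖_F`. -/
theorem stmt0 {p m r : ℕ} (hr : 0 < r)
    (F : Matrix (Fin p) (Fin r) ℝ) (G : Matrix (Fin m) (Fin r) ℝ)
    (K : Matrix (Fin r) (Fin r) ℝ) (d : Fin r → ℝ)
    (hF : Fᵀ * F = 1) (hG : Gᵀ * G = 1)
    (hanti : ∀ i j : Fin r, i ≤ j → d j ≤ d i) (hpos : ∀ i, 0 < d i)
    (E : Matrix (Fin p) (Fin m) ℝ) (hEop : opNorm E ≤ 1) (hEnuc : nucNorm E ≤ (r : ℝ)) :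
    Matrix.trace ((F * K * Gᵀ)ᵀ * (F * Gᵀ - E)) ≥
      d ⟨r - 1, by omega⟩ / 2 * frob (F * Gᵀ - E) ^ 2
        - frob (K - Matrix.diagonal d) * frob (F * Gᵀ - E) := by
  set Δ := F * Gᵀ - E
  set dr := d ⟨r - 1, by omega⟩
  have hcomp : Fᵀ * Δ * G = 1 - Fᵀ * E * G := by
    rw [Matrix.mul_sub, Matrix.sub_mul, ← Matrix.mul_assoc, hF, Matrix.one_mul,
      Matrix.mul_assoc, hG]
  have hdiag : dr * trace (1 - Fᵀ * E * G) ≤ trace ((F * diagonal d * Gᵀ)ᵀ * Δ) := by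
    rw [trace_transpose_mul_mul_transpose_mul, hcomp, diagonal_transpose]
    refine mul_trace_le_trace_diagonal_mul
      (fun i => hanti i _ (Fin.le_iff_val_le_val.2 (Nat.le_sub_one_of_lt i.2))) fun i => ?_
    simpa using diag_transpose_mul_mul_le_one hF hG hEop i
  have hrest : -(frob (K - diagonal d) * frob Δ) ≤ trace ((F * (K - diagonal d) * Gᵀ)ᵀ * Δ) :=
    frob_mul_mul_transpose hF hG (K - diagonal d) ▸ neg_frob_mul_frob_le_trace _ _
  have hsplit : trace ((F * K * Gᵀ)ᵀ * Δ) =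
      trace ((F * diagonal d * Gᵀ)ᵀ * Δ) + trace ((F * (K - diagonal d) * Gᵀ)ᵀ * Δ) := by
    simp only [trace_transpose_mul_mul_transpose_mul, ← trace_add, ← Matrix.add_mul,
      ← transpose_add, add_sub_cancel]
  have hgap := mul_le_mul_of_nonneg_left (frob_sub_sq_le_two_mul_trace hF hG hEop hEnuc)
    (hpos ⟨r - 1, by omega⟩).le
  linarith
end

section
/- With f_{μ,0}, f_{μ,1} the truncated renormalized densities from the planted-clique reduction, define h_{μ,0} = (f_{μ,0} + f_{μ,1})/2 and h_{μ,1} = δ_N f_{μ,1} + (1 − δ_N)(f_{μ,0} + f_{μ,1})/2. There exists an absolute constant C > 0 such that for all integers N ≥ 12, k ≤ N/12 and all |μ| ≤ 3√(η_N log N): TV(h_{μ,0}, φ_0) ≤ C N^{-3} and TV(h_{μ,1}, φ̄_μ) ≤ C N^{-3}. -/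
/-!
The untruncated densities `g_s = φ₀ + s δ⁻¹ (φ̄_μ − φ₀)` satisfy the exact mixture identities
`(g₋₁ + g₁)/2 = φ₀` and `δ g₁ + (1 − δ) φ₀ = φ̄_μ`, and `L¹` distances only shrink under convex
combinations, so both total variation distances are at most `max_s ‖f_s − g_s‖₁`.
Truncating `g_s` to the window `|x| ≤ 3√(log N)` and renormalizing costs `O(τ)` in `L¹`, where `τ`
is the mass of `|g_s|` outside the window; Gaussian tails make `τ = O(δ⁻¹ N⁻⁴) = O(N⁻³)`.
Inside the window `μ² x² ≲ δ`, so `|φ̄_μ − φ₀| ≤ (μ² x² + μ²/2) φ₀ ≤ 2 δ φ₀` and `|g_s| ≤ 3 φ₀`.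
-/

open Real MeasureTheory

noncomputable def gpdf (μ x : ℝ) : ℝ :=
  (Real.sqrt (2 * Real.pi))⁻¹ * Real.exp (-(x - μ) ^ 2 / 2)

/-- The truncated renormalized density
`f_{μ,i}(x) = M_i (φ₀(x) − (−1)^i δ_N⁻¹(φ̄_μ(x) − φ₀(x))) 1{|x| ≤ 3√(log N)}`,
with sign `s = −(−1)^i`. -/
noncomputable def fdens (N : ℕ) (δ M μ s x : ℝ) : ℝ :=
  Set.indicator (Set.Icc (-(3 * Real.sqrt (Real.log N))) (3 * Real.sqrt (Real.log N)))
    (fun y => M * (gpdf 0 y + s * δ⁻¹ * ((gpdf μ y + gpdf (-μ) y) / 2 - gpdf 0 y))) x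

open Set Filter Topology

lemma gpdf_eq_gaussianPDFReal (ν : ℝ) : gpdf ν = ProbabilityTheory.gaussianPDFReal ν 1 := by
  funext x
  simp [gpdf, ProbabilityTheory.gaussianPDFReal]

lemma gpdf_nonneg (ν x : ℝ) : 0 ≤ gpdf ν x := by
  unfold gpdf
  positivity

lemma integrable_gpdf (ν : ℝ) : Integrable (gpdf ν) := by
  rw [gpdf_eq_gaussianPDFReal]
  exact ProbabilityTheory.integrable_gaussianPDFReal ν 1

lemma integral_gpdf (ν : ℝ) : ∫ x, gpdf ν x = 1 := by
  rw [gpdf_eq_gaussianPDFReal]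
  exact ProbabilityTheory.integral_gaussianPDFReal_eq_one ν one_ne_zero

lemma gpdf_le_exp (ν x : ℝ) : gpdf ν x ≤ exp (-(x - ν) ^ 2 / 2) := by
  have h : (√(2 * π))⁻¹ ≤ 1 :=
    inv_le_one_of_one_le₀ (one_le_sqrt.2 (by linarith [pi_gt_three]))
  exact mul_le_of_le_one_left (exp_pos _).le h

lemma hasDerivAt_neg_exp_neg_sq (c x : ℝ) :
    HasDerivAt (fun y => -exp (-(y - c) ^ 2 / 2)) ((x - c) * exp (-(x - c) ^ 2 / 2)) x := by
  have h : HasDerivAt (fun y => -(y - c) ^ 2 / 2) (-(x - c)) x :=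
    ((((hasDerivAt_id x).sub_const c).pow 2).neg.div_const 2).congr_deriv (by simp; ring)
  exact h.exp.neg.congr_deriv (by ring)

lemma tendsto_neg_exp_neg_sq (c : ℝ) :
    Tendsto (fun y => -exp (-(y - c) ^ 2 / 2)) atTop (𝓝 0) := by
  rw [← neg_zero]
  refine (tendsto_exp_atBot.comp ?_).neg
  have h := (tendsto_pow_atTop two_ne_zero).comp
    (tendsto_atTop_add_const_right atTop (-c) tendsto_id)
  exact (tendsto_neg_atTop_atBot.comp h).atBot_div_const two_pos

lemma setIntegral_Ioi_gpdf_le {ν a : ℝ} (h : ν + 1 ≤ a) :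
    ∫ x in Ioi a, gpdf ν x ≤ exp (-(a - ν) ^ 2 / 2) := by
  have hderiv : ∀ x ∈ Ici a, HasDerivAt (fun y => -exp (-(y - ν) ^ 2 / 2))
      ((x - ν) * exp (-(x - ν) ^ 2 / 2)) x := fun x _ => hasDerivAt_neg_exp_neg_sq ν x
  have hpos : ∀ x ∈ Ioi a, 0 ≤ (x - ν) * exp (-(x - ν) ^ 2 / 2) := fun x hx =>
    mul_nonneg (by linarith [hx.out]) (exp_pos _).le
  have hint := integrableOn_Ioi_deriv_of_nonneg' hderiv hpos (tendsto_neg_exp_neg_sq ν)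
  calc ∫ x in Ioi a, gpdf ν x ≤ ∫ x in Ioi a, (x - ν) * exp (-(x - ν) ^ 2 / 2) := by
        refine setIntegral_mono_on (integrable_gpdf ν).integrableOn hint measurableSet_Ioi
          fun x hx => (gpdf_le_exp ν x).trans ?_
        exact le_mul_of_one_le_left (exp_pos _).le (by linarith [hx.out])
    _ = exp (-(a - ν) ^ 2 / 2) := by
        rw [integral_Ioi_of_hasDerivAt_of_nonneg' hderiv hpos (tendsto_neg_exp_neg_sq ν)]
        ring

lemma setIntegral_Iio_neg_gpdf (ν a : ℝ) :
    ∫ x in Iio (-a), gpdf ν x = ∫ x in Ioi a, gpdf (-ν) x := by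
  rw [setIntegral_congr_set Iio_ae_eq_Iic, ← integral_comp_neg_Ioi]
  refine setIntegral_congr_fun measurableSet_Ioi fun x _ => ?_
  simp only [gpdf]
  ring_nf

lemma setIntegral_compl_Icc_gpdf_le {ν a : ℝ} (h : |ν| + 1 ≤ a) :
    ∫ x in (Icc (-a) a)ᶜ, gpdf ν x ≤ 2 * exp (-(a - |ν|) ^ 2 / 2) := by
  have hdisj : Disjoint (Iio (-a)) (Ioi a) :=
    Set.disjoint_left.2 fun x (h₁ : x < -a) (h₂ : a < x) => by linarith [abs_nonneg ν]
  have htail : ∀ ν', |ν'| = |ν| → ∫ x in Ioi a, gpdf ν' x ≤ exp (-(a - |ν|) ^ 2 / 2) := by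
    intro ν' hν'
    refine (setIntegral_Ioi_gpdf_le (by linarith [le_abs_self ν'])).trans (exp_le_exp.2 ?_)
    nlinarith [le_abs_self ν']
  have hcompl : (Icc (-a) a)ᶜ = Iio (-a) ∪ Ioi a := by
    ext x
    simp [imp_iff_not_or]
  rw [hcompl, setIntegral_union hdisj measurableSet_Ioi (integrable_gpdf ν).integrableOn
    (integrable_gpdf ν).integrableOn, setIntegral_Iio_neg_gpdf]
  linarith [htail ν rfl, htail (-ν) (abs_neg ν)]

-- `φ̄_μ`
noncomputable def gmix (μ x : ℝ) : ℝ := (gpdf μ x + gpdf (-μ) x) / 2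

lemma gmix_nonneg (μ x : ℝ) : 0 ≤ gmix μ x := by
  unfold gmix
  linarith [gpdf_nonneg μ x, gpdf_nonneg (-μ) x]

lemma integrable_gmix (μ : ℝ) : Integrable (gmix μ) :=
  ((integrable_gpdf μ).add (integrable_gpdf (-μ))).div_const 2

lemma integral_gmix (μ : ℝ) : ∫ x, gmix μ x = 1 := by
  simp only [gmix]
  rw [integral_div, integral_add (integrable_gpdf μ) (integrable_gpdf (-μ)), integral_gpdf,
    integral_gpdf]
  norm_num

lemma setIntegral_compl_Icc_gmix_le {μ a : ℝ} (h : |μ| + 1 ≤ a) :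
    ∫ x in (Icc (-a) a)ᶜ, gmix μ x ≤ 2 * exp (-(a - |μ|) ^ 2 / 2) := by
  have h₁ := setIntegral_compl_Icc_gpdf_le h
  have h₂ := setIntegral_compl_Icc_gpdf_le (ν := -μ) (a := a) (by rwa [abs_neg])
  rw [abs_neg] at h₂
  simp only [gmix]
  rw [integral_div, integral_add (integrable_gpdf μ).integrableOn
    (integrable_gpdf (-μ)).integrableOn]
  linarith

lemma gmix_eq (μ x : ℝ) : gmix μ x = exp (-μ ^ 2 / 2) * cosh (μ * x) * gpdf 0 x := by
  have hsplit : ∀ ν, exp (-(x - ν) ^ 2 / 2)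
      = exp (-ν ^ 2 / 2) * exp (ν * x) * exp (-(x - 0) ^ 2 / 2) := fun ν => by
    rw [← exp_add, ← exp_add]
    ring_nf
  simp only [gmix, gpdf, cosh_eq, hsplit μ, hsplit (-μ)]
  ring_nf

lemma abs_gmix_sub_gpdf_le {μ x : ℝ} (h : (μ * x) ^ 2 ≤ 2) :
    |gmix μ x - gpdf 0 x| ≤ ((μ * x) ^ 2 + μ ^ 2 / 2) * gpdf 0 x := by
  have hupper : cosh (μ * x) ≤ 1 + (μ * x) ^ 2 := by
    have hy : |(μ * x) ^ 2 / 2| = (μ * x) ^ 2 / 2 := abs_of_nonneg (by positivity)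
    have h₁ := abs_exp_sub_one_le (x := (μ * x) ^ 2 / 2) (by rw [hy]; linarith)
    rw [hy] at h₁
    linarith [cosh_le_exp_half_sq (μ * x), (abs_le.1 h₁).2]
  have hexp : 1 - μ ^ 2 / 2 ≤ exp (-μ ^ 2 / 2) := by
    linarith [add_one_le_exp (-μ ^ 2 / 2)]
  have hexp' : exp (-μ ^ 2 / 2) ≤ 1 := exp_le_one_iff.2 (by nlinarith)
  have hcosh := one_le_cosh (μ * x)
  rw [gmix_eq, ← sub_one_mul, abs_mul, abs_of_nonneg (gpdf_nonneg 0 x)]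
  refine mul_le_mul_of_nonneg_right (abs_le.2 ⟨?_, ?_⟩) (gpdf_nonneg 0 x)
  · nlinarith [exp_pos (-μ ^ 2 / 2)]
  · nlinarith [exp_pos (-μ ^ 2 / 2)]

-- The untruncated `g_i` of the paper, with the sign convention of `fdens`.
noncomputable def gdens (δ μ s x : ℝ) : ℝ := gpdf 0 x + s * δ⁻¹ * (gmix μ x - gpdf 0 x)

lemma gdens_neg_one_add_gdens_one (δ μ x : ℝ) :
    (gdens δ μ (-1) x + gdens δ μ 1 x) / 2 = gpdf 0 x := by
  unfold gdens
  ring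

-- For `δ = 0` the convention `0⁻¹ = 0` makes `g₁ = φ₀`, so the identity then needs `μ = 0`.
lemma mul_gdens_one_add_mul_gpdf {δ μ : ℝ} (h : δ = 0 → μ = 0) (x : ℝ) :
    δ * gdens δ μ 1 x + (1 - δ) * gpdf 0 x = gmix μ x := by
  rcases eq_or_ne δ 0 with hδ | hδ
  · simp [hδ, h hδ, gmix]
  · unfold gdens
    field_simp
    ring

lemma integrable_gdens (δ μ s : ℝ) : Integrable (gdens δ μ s) :=
  (integrable_gpdf 0).add (((integrable_gmix μ).sub (integrable_gpdf 0)).const_mul _)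

lemma integral_gdens (δ μ s : ℝ) : ∫ x, gdens δ μ s x = 1 := by
  have hD : Integrable (fun x => gmix μ x - gpdf 0 x) := (integrable_gmix μ).sub (integrable_gpdf 0)
  simp only [gdens]
  rw [integral_add (integrable_gpdf 0) (hD.const_mul _), integral_const_mul,
    integral_sub (integrable_gmix μ) (integrable_gpdf 0), integral_gmix, integral_gpdf]
  ring

lemma abs_gdens_le_of_abs_le {δ μ s x A : ℝ} (hs : |s| ≤ 1) (hδ : 0 ≤ δ)
    (hA : |gmix μ x - gpdf 0 x| ≤ A) : |gdens δ μ s x| ≤ gpdf 0 x + δ⁻¹ * A := by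
  have hδ' : 0 ≤ δ⁻¹ := inv_nonneg.2 hδ
  calc |gdens δ μ s x| ≤ |gpdf 0 x| + |s| * (δ⁻¹ * |gmix μ x - gpdf 0 x|) := by
        unfold gdens
        refine (abs_add_le _ _).trans_eq ?_
        rw [abs_mul, abs_mul, abs_of_nonneg hδ', mul_assoc]
    _ ≤ gpdf 0 x + 1 * (δ⁻¹ * A) := by
        rw [abs_of_nonneg (gpdf_nonneg 0 x)]
        gcongr
    _ = gpdf 0 x + δ⁻¹ * A := by ring

lemma abs_gdens_le {δ μ s : ℝ} (hs : |s| ≤ 1) (hδ : 0 ≤ δ) (x : ℝ) :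
    |gdens δ μ s x| ≤ gpdf 0 x + δ⁻¹ * (gmix μ x + gpdf 0 x) := by
  refine abs_gdens_le_of_abs_le hs hδ ((abs_sub _ _).trans_eq ?_)
  rw [abs_of_nonneg (gmix_nonneg μ x), abs_of_nonneg (gpdf_nonneg 0 x)]

lemma abs_gdens_le_three_mul {δ μ s x : ℝ} (hs : |s| ≤ 1) (hδ : 0 ≤ δ)
    (hx : (μ * x) ^ 2 ≤ 2) (hμ : (μ * x) ^ 2 + μ ^ 2 / 2 ≤ 2 * δ) :
    |gdens δ μ s x| ≤ 3 * gpdf 0 x := by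
  have h := abs_gdens_le_of_abs_le hs hδ (abs_gmix_sub_gpdf_le hx)
  have hδ' : δ⁻¹ * ((μ * x) ^ 2 + μ ^ 2 / 2) ≤ 2 := by
    rcases eq_or_ne δ 0 with h0 | h0
    · simp [h0]
    · rw [inv_mul_le_iff₀ (lt_of_le_of_ne hδ h0.symm)]
      linarith
  nlinarith [gpdf_nonneg 0 x]

lemma abs_sub_one_le_of_mul_eq_one {M Z ε : ℝ} (h : M * Z = 1) (hZ : |Z - 1| ≤ ε)
    (hε : ε ≤ 1 / 2) : |M - 1| ≤ 2 * ε := by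
  obtain ⟨hZ₁, hZ₂⟩ := abs_le.1 hZ
  have hM : 0 ≤ M := by nlinarith
  have hM2 : M ≤ 2 := by nlinarith
  rw [show M - 1 = M * (1 - Z) by linear_combination h, abs_mul, abs_of_nonneg hM, abs_sub_comm]
  exact mul_le_mul hM2 hZ (abs_nonneg _) zero_le_two

section

variable {α : Type*} [MeasurableSpace α] {ρ : Measure α}

theorem integral_abs_indicator_mul_sub_le {g : α → ℝ} {s : Set α} {M τ K : ℝ}
    (hs : MeasurableSet s) (hg : Integrable g ρ) (hg1 : ∫ x, g x ∂ρ = 1)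
    (hM : ∫ x, s.indicator (fun y => M * g y) x ∂ρ = 1)
    (hτ : ∫ x in sᶜ, |g x| ∂ρ ≤ τ) (hτ2 : τ ≤ 1 / 2) (hK : ∫ x in s, |g x| ∂ρ ≤ K) :
    ∫ x, |s.indicator (fun y => M * g y) x - g x| ∂ρ ≤ (2 * K + 1) * τ := by
  have hMZ : M * ∫ x in s, g x ∂ρ = 1 := by
    rwa [integral_indicator hs, integral_const_mul] at hM
  have hZ : |∫ x in s, g x ∂ρ - 1| ≤ τ := by
    have := integral_add_compl hs hg
    rw [hg1] at this
    rw [show ∫ x in s, g x ∂ρ - 1 = -∫ x in sᶜ, g x ∂ρ by linarith, abs_neg]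
    exact (abs_integral_le_integral_abs).trans hτ
  have hM1 := abs_sub_one_le_of_mul_eq_one hMZ hZ hτ2
  have hτ0 : 0 ≤ τ := (integral_nonneg fun _ => abs_nonneg _).trans hτ
  have hdiff : Integrable (fun x => |s.indicator (fun y => M * g y) x - g x|) ρ :=
    ((hg.const_mul M).indicator hs |>.sub hg).abs
  rw [← integral_add_compl hs hdiff]
  have hon : ∫ x in s, |s.indicator (fun y => M * g y) x - g x| ∂ρ
      = |M - 1| * ∫ x in s, |g x| ∂ρ := by
    rw [← integral_const_mul]
    refine setIntegral_congr_fun hs fun x hx => ?_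
    simp only [indicator_of_mem hx, ← sub_one_mul, abs_mul]
  have hoff : ∫ x in sᶜ, |s.indicator (fun y => M * g y) x - g x| ∂ρ = ∫ x in sᶜ, |g x| ∂ρ := by
    refine setIntegral_congr_fun hs.compl fun x hx => ?_
    simp only [indicator_of_notMem hx, zero_sub, abs_neg]
  rw [hon, hoff]
  have hK' : |M - 1| * ∫ x in s, |g x| ∂ρ ≤ 2 * τ * K :=
    mul_le_mul hM1 hK (integral_nonneg fun _ => abs_nonneg _) (by positivity)
  linarith

theorem integral_abs_convex_comb_sub_le {F G f g f' g' : α → ℝ} {a b ε : ℝ}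
    (ha : 0 ≤ a) (hb : 0 ≤ b) (hab : a + b = 1)
    (hi : Integrable (fun x => f x - g x) ρ) (hi' : Integrable (fun x => f' x - g' x) ρ)
    (h : ∫ x, |f x - g x| ∂ρ ≤ ε) (h' : ∫ x, |f' x - g' x| ∂ρ ≤ ε)
    (hF : ∀ x, F x = a * f x + b * f' x) (hG : ∀ x, G x = a * g x + b * g' x) :
    ∫ x, |F x - G x| ∂ρ ≤ ε := by
  calc ∫ x, |F x - G x| ∂ρ ≤ ∫ x, (a * |f x - g x| + b * |f' x - g' x|) ∂ρ := by
        refine integral_mono_of_nonneg (Eventually.of_forall fun _ => abs_nonneg _)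
          ((hi.abs.const_mul a).add (hi'.abs.const_mul b)) (Eventually.of_forall fun x => ?_)
        simp only [hF, hG]
        rw [show a * f x + b * f' x - (a * g x + b * g' x)
            = a * (f x - g x) + b * (f' x - g' x) by ring]
        refine (abs_add_le _ _).trans_eq ?_
        rw [abs_mul, abs_mul, abs_of_nonneg ha, abs_of_nonneg hb]
    _ = a * ∫ x, |f x - g x| ∂ρ + b * ∫ x, |f' x - g' x| ∂ρ := by
        rw [integral_add (hi.abs.const_mul a) (hi'.abs.const_mul b), integral_const_mul,
          integral_const_mul]
    _ ≤ a * ε + b * ε := by gcongr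
    _ = ε := by rw [← add_mul, hab, one_mul]

end

def window (N : ℕ) : Set ℝ := Icc (-(3 * √(log N))) (3 * √(log N))

lemma fdens_eq_indicator (N : ℕ) (δ M μ s : ℝ) :
    fdens N δ M μ s = (window N).indicator (fun x => M * gdens δ μ s x) := rfl

lemma integrable_fdens (N : ℕ) (δ M μ s : ℝ) : Integrable (fdens N δ M μ s) := by
  rw [fdens_eq_indicator]
  exact ((integrable_gdens δ μ s).const_mul M).indicator measurableSet_Icc

lemma two_le_log_of_twelve_le {N : ℝ} (hN : 12 ≤ N) : 2 ≤ log N := by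
  rw [le_log_iff_exp_le (by linarith), show (2 : ℝ) = 1 + 1 by norm_num, exp_add]
  nlinarith [exp_one_lt_d9, exp_pos 1]

lemma seven_fifths_le_sqrt_log {N : ℕ} (hN : 12 ≤ N) : 7 / 5 ≤ √(log N) := by
  have hL := two_le_log_of_twelve_le (N := N) (by exact_mod_cast hN)
  rw [le_sqrt (by norm_num) (by linarith)]
  linarith

lemma exp_neg_sq_window_le {N : ℕ} (hN : 12 ≤ N) {ν : ℝ} (hν : |ν| ≤ 1 / 10) :
    exp (-(3 * √(log N) - |ν|) ^ 2 / 2) ≤ 1 / (N : ℝ) ^ 4 := by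
  have hN0 : (0 : ℝ) < N := by positivity
  have ht := seven_fifths_le_sqrt_log hN
  have hexp : exp (-(4 * log N)) = 1 / (N : ℝ) ^ 4 := by
    rw [exp_neg, show (4 : ℝ) * log N = ((4 : ℕ) : ℝ) * log N by norm_num, exp_nat_mul,
      exp_log hN0, one_div]
  have hsq : √(log N) ^ 2 = log N := sq_sqrt (sqrt_pos.1 (by linarith)).le
  rw [← hexp, exp_le_exp]
  nlinarith [abs_nonneg ν]

-- The parameter regime of the theorem, for `δ = δ_N = k/N`; `δ⁻¹ ≤ N` also covers `k = 0`,
-- where `δ⁻¹ = 0`.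
structure Admissible (N : ℕ) (δ μ : ℝ) : Prop where
  twelve_le : 12 ≤ N
  nonneg : 0 ≤ δ
  le_one_twelfth : δ ≤ 1 / 12
  inv_le : δ⁻¹ ≤ N
  five_mul_log_mul_sq_le : 5 * log N * μ ^ 2 ≤ δ

lemma admissible_of_le {N k : ℕ} {μ : ℝ} (hN : 12 ≤ N) (hk : (k : ℝ) ≤ N / 12)
    (hμ : |μ| ≤ 3 * √((k : ℝ) / (45 * N * log N ^ 2) * log N)) :
    Admissible N (k / N) μ where
  twelve_le := hN
  nonneg := by positivity
  le_one_twelfth := by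
    rw [div_le_iff₀ (by positivity)]
    linarith
  inv_le := by
    rw [inv_div]
    rcases k.eq_zero_or_pos with rfl | hk0
    · simp
    · exact div_le_self (Nat.cast_nonneg N) (by exact_mod_cast hk0)
  five_mul_log_mul_sq_le := by
    have hL := two_le_log_of_twelve_le (N := N) (by exact_mod_cast hN)
    have hsq : μ ^ 2 ≤ 9 * ((k : ℝ) / (45 * N * log N ^ 2) * log N) := by
      have := (le_sqrt (by positivity) (by positivity)).1
        (show |μ| / 3 ≤ √((k : ℝ) / (45 * N * log N ^ 2) * log N) by linarith)
      nlinarith [sq_abs μ]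
    calc (5 : ℝ) * log N * μ ^ 2
        ≤ 5 * log N * (9 * ((k : ℝ) / (45 * N * log N ^ 2) * log N)) := by gcongr
      _ = (k : ℝ) / N := by
          field_simp
          ring

namespace Admissible

variable {N : ℕ} {δ μ : ℝ}

lemma sq_le_div_ten (h : Admissible N δ μ) : μ ^ 2 ≤ δ / 10 := by
  have := two_le_log_of_twelve_le (N := N) (by exact_mod_cast h.twelve_le)
  nlinarith [h.five_mul_log_mul_sq_le, sq_nonneg μ]

lemma mu_eq_zero (h : Admissible N δ μ) (hδ : δ = 0) : μ = 0 := by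
  have := h.sq_le_div_ten
  rw [hδ] at this
  exact pow_eq_zero_iff two_ne_zero |>.1 (le_antisymm (by linarith) (sq_nonneg μ))

lemma abs_le_one_tenth (h : Admissible N δ μ) : |μ| ≤ 1 / 10 := by
  have := h.sq_le_div_ten
  nlinarith [sq_abs μ, abs_nonneg μ, h.le_one_twelfth]

lemma mul_sq_add_sq_le (h : Admissible N δ μ) {x : ℝ} (hx : x ∈ window N) :
    (μ * x) ^ 2 + μ ^ 2 / 2 ≤ 2 * δ := by
  have hL := two_le_log_of_twelve_le (N := N) (by exact_mod_cast h.twelve_le)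
  have hsq : √(log N) ^ 2 = log N := sq_sqrt (by linarith)
  have hx2 : x ^ 2 ≤ 9 * log N := by nlinarith [hx.1, hx.2]
  nlinarith [h.five_mul_log_mul_sq_le, sq_nonneg μ, mul_le_mul_of_nonneg_left hx2 (sq_nonneg μ)]

lemma setIntegral_window_abs_gdens_le (h : Admissible N δ μ) {s : ℝ} (hs : |s| ≤ 1) :
    ∫ x in window N, |gdens δ μ s x| ≤ 3 := by
  calc ∫ x in window N, |gdens δ μ s x| ≤ ∫ x in window N, 3 * gpdf 0 x := by
        refine setIntegral_mono_on (integrable_gdens δ μ s).abs.integrableOn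
          ((integrable_gpdf 0).const_mul 3).integrableOn measurableSet_Icc fun x hx => ?_
        have hx' := h.mul_sq_add_sq_le hx
        exact abs_gdens_le_three_mul hs h.nonneg
          (by nlinarith [h.le_one_twelfth, sq_nonneg μ]) hx'
    _ = 3 * ∫ x in window N, gpdf 0 x := integral_const_mul _ _
    _ ≤ 3 * 1 := by
        gcongr
        exact (setIntegral_le_integral (integrable_gpdf 0)
          (Eventually.of_forall (gpdf_nonneg 0))).trans_eq (integral_gpdf 0)
    _ = 3 := mul_one 3

lemma setIntegral_compl_window_abs_gdens_le (h : Admissible N δ μ) {s : ℝ} (hs : |s| ≤ 1) :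
    ∫ x in (window N)ᶜ, |gdens δ μ s x| ≤ 5 / (N : ℝ) ^ 3 := by
  have hN : (12 : ℝ) ≤ N := by exact_mod_cast h.twelve_le
  have hrad : ∀ ν : ℝ, |ν| ≤ 1 / 10 → |ν| + 1 ≤ 3 * √(log N) := fun ν hν => by
    linarith [seven_fifths_le_sqrt_log h.twelve_le]
  have htail0 : ∫ x in (window N)ᶜ, gpdf 0 x ≤ 2 / (N : ℝ) ^ 4 := by
    have hν : |(0 : ℝ)| ≤ 1 / 10 := by norm_num
    refine (setIntegral_compl_Icc_gpdf_le (hrad 0 hν)).trans ?_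
    exact (mul_le_mul_of_nonneg_left (exp_neg_sq_window_le h.twelve_le hν) zero_le_two).trans_eq
      (by ring)
  have htail1 : ∫ x in (window N)ᶜ, gmix μ x ≤ 2 / (N : ℝ) ^ 4 := by
    refine (setIntegral_compl_Icc_gmix_le (hrad μ h.abs_le_one_tenth)).trans ?_
    exact (mul_le_mul_of_nonneg_left (exp_neg_sq_window_le h.twelve_le h.abs_le_one_tenth)
      zero_le_two).trans_eq (by ring)
  have hΦ := (integrable_gpdf 0).integrableOn (s := (window N)ᶜ)
  have hΨ := (integrable_gmix μ).integrableOn (s := (window N)ᶜ)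
  have hsum : IntegrableOn (fun x => gmix μ x + gpdf 0 x) (window N)ᶜ := hΨ.add hΦ
  have hpos : 0 ≤ (∫ x in (window N)ᶜ, gmix μ x) + ∫ x in (window N)ᶜ, gpdf 0 x :=
    add_nonneg (setIntegral_nonneg measurableSet_Icc.compl fun x _ => gmix_nonneg μ x)
      (setIntegral_nonneg measurableSet_Icc.compl fun x _ => gpdf_nonneg 0 x)
  have hN0 : (0 : ℝ) < N := by linarith
  calc ∫ x in (window N)ᶜ, |gdens δ μ s x|
        ≤ ∫ x in (window N)ᶜ, (gpdf 0 x + δ⁻¹ * (gmix μ x + gpdf 0 x)) :=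
        setIntegral_mono_on (integrable_gdens δ μ s).abs.integrableOn
          (hΦ.add (hsum.const_mul _)) measurableSet_Icc.compl
          fun x _ => abs_gdens_le hs h.nonneg x
    _ = (∫ x in (window N)ᶜ, gpdf 0 x)
          + δ⁻¹ * ((∫ x in (window N)ᶜ, gmix μ x) + ∫ x in (window N)ᶜ, gpdf 0 x) := by
        rw [integral_add hΦ (hsum.const_mul _), integral_const_mul, integral_add hΨ hΦ]
    _ ≤ 2 / (N : ℝ) ^ 4 + N * (2 / (N : ℝ) ^ 4 + 2 / (N : ℝ) ^ 4) :=
        add_le_add htail0 (mul_le_mul h.inv_le (add_le_add htail1 htail0) hpos hN0.le)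
    _ = (2 + 4 * N) / (N : ℝ) ^ 4 := by
        field_simp
        ring
    _ ≤ 5 * N / (N : ℝ) ^ 4 := by
        gcongr
        linarith
    _ = 5 / (N : ℝ) ^ 3 := by
        field_simp

lemma integral_abs_fdens_sub_gdens_le (h : Admissible N δ μ) {M s : ℝ} (hs : |s| ≤ 1)
    (hM : ∫ x, fdens N δ M μ s x = 1) :
    ∫ x, |fdens N δ M μ s x - gdens δ μ s x| ≤ 35 / (N : ℝ) ^ 3 := by
  have hN : (12 : ℝ) ≤ N := by exact_mod_cast h.twelve_le
  have hτ : 5 / (N : ℝ) ^ 3 ≤ 1 / 2 := by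
    rw [div_le_div_iff₀ (by positivity) two_pos]
    nlinarith [pow_le_pow_left₀ (by norm_num) hN 3]
  rw [fdens_eq_indicator] at hM ⊢
  refine (integral_abs_indicator_mul_sub_le measurableSet_Icc (integrable_gdens δ μ s)
    (integral_gdens δ μ s) hM (h.setIntegral_compl_window_abs_gdens_le hs) hτ
    (h.setIntegral_window_abs_gdens_le hs)).trans_eq ?_
  ring

end Admissible

/-- With `h_{μ,0} = (f_{μ,0} + f_{μ,1})/2` and
`h_{μ,1} = δ_N f_{μ,1} + (1 − δ_N)(f_{μ,0} + f_{μ,1})/2`, there is an absolute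
constant `C > 0` such that for all `N ≥ 12`, `k ≤ N/12`, `|μ| ≤ 3√(η_N log N)`
(where `δ_N = k/N`, `η_N = k/(45N(log N)²)` and `M₀, M₁` are the normalizing
constants): `TV(h_{μ,0}, φ₀) ≤ C N⁻³` and `TV(h_{μ,1}, φ̄_μ) ≤ C N⁻³`. -/
theorem stmt10 : ∃ C : ℝ, 0 < C ∧ ∀ (N k : ℕ) (μ M0 M1 : ℝ),
    12 ≤ N → (k : ℝ) ≤ (N : ℝ) / 12 →
    |μ| ≤ 3 * Real.sqrt ((k : ℝ) / (45 * N * Real.log N ^ 2) * Real.log N) →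
    0 < M0 → 0 < M1 →
    (∫ x, fdens N ((k : ℝ) / N) M0 μ (-1) x) = 1 →
    (∫ x, fdens N ((k : ℝ) / N) M1 μ 1 x) = 1 →
    (1 / 2) * (∫ x, |(fdens N ((k : ℝ) / N) M0 μ (-1) x
          + fdens N ((k : ℝ) / N) M1 μ 1 x) / 2 - gpdf 0 x|)
        ≤ C / (N : ℝ) ^ 3
    ∧ (1 / 2) * (∫ x, |((k : ℝ) / N) * fdens N ((k : ℝ) / N) M1 μ 1 x
          + (1 - (k : ℝ) / N) * ((fdens N ((k : ℝ) / N) M0 μ (-1) x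
            + fdens N ((k : ℝ) / N) M1 μ 1 x) / 2)
          - (gpdf μ x + gpdf (-μ) x) / 2|)
        ≤ C / (N : ℝ) ^ 3 := by
  refine ⟨18, by norm_num, fun N k μ M0 M1 hN hk hμ _ _ hf0 hf1 => ?_⟩
  have h := admissible_of_le hN hk hμ
  set δ : ℝ := k / N
  have hi₀ := (integrable_fdens N δ M0 μ (-1)).sub (integrable_gdens δ μ (-1))
  have hi₁ := (integrable_fdens N δ M1 μ 1).sub (integrable_gdens δ μ 1)
  have h₀ := h.integral_abs_fdens_sub_gdens_le (by norm_num) hf0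
  have h₁ := h.integral_abs_fdens_sub_gdens_le (by norm_num) hf1
  have hmid : ∫ x, |(fdens N δ M0 μ (-1) x + fdens N δ M1 μ 1 x) / 2 - gpdf 0 x|
      ≤ 35 / (N : ℝ) ^ 3 :=
    integral_abs_convex_comb_sub_le (a := 1 / 2) (b := 1 / 2) (by norm_num) (by norm_num)
      (by norm_num) hi₀ hi₁ h₀ h₁ (fun x => by ring)
      (fun x => by linarith [gdens_neg_one_add_gdens_one δ μ x])
  have hhalf : ∀ X : ℝ, X ≤ 35 / (N : ℝ) ^ 3 → 1 / 2 * X ≤ 18 / (N : ℝ) ^ 3 := fun X hX =>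
    calc 1 / 2 * X ≤ 1 / 2 * 35 / (N : ℝ) ^ 3 := by rw [mul_div_assoc]; gcongr
      _ ≤ 18 / (N : ℝ) ^ 3 := by gcongr; norm_num
  have hiₘ := ((integrable_fdens N δ M0 μ (-1)).add (integrable_fdens N δ M1 μ 1)).div_const 2
    |>.sub (integrable_gpdf 0)
  refine ⟨hhalf _ hmid, hhalf _ ?_⟩
  exact integral_abs_convex_comb_sub_le h.nonneg (by linarith [h.le_one_twelfth]) (by ring)
    hi₁ hiₘ h₁ hmid (fun _ => rfl) (fun x => (mul_gdens_one_add_mul_gpdf h.mu_eq_zero x).symm)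
end
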